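/- For d ≥ 3 and 0 < T ≤ (d−2)/(d−1), the quantity (A) := H(1 − T/(d−2)) − H(1 − (d−1)T/(d−2)) − T·log₂(d−2) − H(T) is greater than or equal to (B) := −(T·log₂(d−1) + H(T) + H(1−T)). -/

import Mathlib

/-!
With `x = 1 - (d-1)T/(d-2)`, the points `1 - T` and `1 - T/(d-2)` lie in `[x, 1]` and have the
same sum as `x` and `1`. Concavity of `H` therefore gives `H x + H 1 ≤ H(1 - T) + H(1 - T/(d-2))`,
and `H 1 = 0`. What remains is `T log₂(d-2) ≤ T log₂(d-1)`.
-/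

/-- Scalar entropy contribution `H(x) = -x log₂ x` (with `0 log₂ 0 = 0`). -/
noncomputable def Hbit (x : ℝ) : ℝ := -(x * Real.logb 2 x)

open Set

theorem ConcaveOn.map_add_map_le_of_mem_Icc {𝕜 β : Type*} [Field 𝕜] [LinearOrder 𝕜]
    [IsStrictOrderedRing 𝕜] [AddCommGroup β] [PartialOrder β] [IsOrderedAddMonoid β]
    [Module 𝕜 β] {s : Set 𝕜} {f : 𝕜 → β} (hf : ConcaveOn 𝕜 s f) {x y z : 𝕜}
    (hx : x ∈ s) (hy : y ∈ s) (hz : z ∈ Icc x y) :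
    f x + f y ≤ f z + f (x + y - z) := by
  obtain ⟨hxz, hzy⟩ := hz
  rcases hxz.eq_or_lt with rfl | hxz'
  · simp
  have hxy : 0 < y - x := by linarith
  set a := (y - z) / (y - x)
  set b := (z - x) / (y - x)
  have ha : 0 ≤ a := div_nonneg (by linarith) hxy.le
  have hb : 0 ≤ b := div_nonneg (by linarith) hxy.le
  have hab : a + b = 1 := by
    rw [← add_div, div_eq_one_iff_eq hxy.ne']; ring
  have hz : a • x + b • y = z := by simp only [smul_eq_mul, a, b]; field_simp; ring
  have hz' : b • x + a • y = x + y - z := by simp only [smul_eq_mul, a, b]; field_simp; ring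
  have h₁ := hf.2 hx hy ha hb hab
  have h₂ := hf.2 hx hy hb ha (by rwa [add_comm])
  rw [hz] at h₁
  rw [hz'] at h₂
  calc f x + f y = (a + b) • f x + (a + b) • f y := by rw [hab, one_smul, one_smul]
    _ = (a • f x + b • f y) + (b • f x + a • f y) := by
      simp only [add_smul]; abel
    _ ≤ f z + f (x + y - z) := add_le_add h₁ h₂

theorem Hbit_eq_negMulLog_div (x : ℝ) : Hbit x = Real.negMulLog x / Real.log 2 := by
  simp only [Hbit, Real.negMulLog, Real.logb]; ring

theorem concaveOn_Hbit : ConcaveOn ℝ (Ici 0) Hbit := by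
  have hHbit : Hbit = fun x ↦ (Real.log 2)⁻¹ • Real.negMulLog x := by
    ext x; rw [Hbit_eq_negMulLog_div, smul_eq_mul, inv_mul_eq_div]
  rw [hHbit]
  exact Real.concaveOn_negMulLog.smul (by positivity)

theorem Hbit_one : Hbit 1 = 0 := by simp [Hbit]

/-- The case (i) minimum dominates the case (ii) minimum. -/
theorem case_i_ge_case_ii (d : ℕ) (hd : 3 ≤ d) (T : ℝ) (hT0 : 0 < T)
    (hT1 : T ≤ ((d : ℝ) - 2) / ((d : ℝ) - 1)) :
    -(T * Real.logb 2 ((d : ℝ) - 1) + Hbit T + Hbit (1 - T)) ≤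
      Hbit (1 - T / ((d : ℝ) - 2)) - Hbit (1 - ((d : ℝ) - 1) * T / ((d : ℝ) - 2))
        - T * Real.logb 2 ((d : ℝ) - 2) - Hbit T := by
  have hd' : (3 : ℝ) ≤ d := by exact_mod_cast hd
  have hc : (0 : ℝ) < (d : ℝ) - 2 := by linarith
  have hcT : ((d : ℝ) - 1) * T ≤ (d : ℝ) - 2 := by
    rw [le_div_iff₀ (by linarith)] at hT1; linarith
  have hx : 0 ≤ 1 - ((d : ℝ) - 1) * T / ((d : ℝ) - 2) := by
    rw [sub_nonneg, div_le_one hc]; exact hcT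
  have hxz : 1 - ((d : ℝ) - 1) * T / ((d : ℝ) - 2) ≤ 1 - T := by
    rw [sub_le_sub_iff_left, le_div_iff₀ hc]; nlinarith
  have hconcave := concaveOn_Hbit.map_add_map_le_of_mem_Icc hx (mem_Ici.2 zero_le_one)
    ⟨hxz, by linarith⟩
  have hreflect :
      1 - ((d : ℝ) - 1) * T / ((d : ℝ) - 2) + 1 - (1 - T) = 1 - T / ((d : ℝ) - 2) := by
    field_simp; ring
  rw [hreflect, Hbit_one, add_zero] at hconcave
  have hlog : Real.logb 2 ((d : ℝ) - 2) ≤ Real.logb 2 ((d : ℝ) - 1) :=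
    Real.logb_le_logb_of_le one_lt_two hc (by linarith)
  linarith [mul_le_mul_of_nonneg_left hlog hT0.le]
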